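/- For every m ≥ 1, R ≥ 1 and every N ≥ 1, the TI-R local polytope L^{(N,m,R)} has at most C · (2^{Rm} + 1)^{C−1} extreme points, where C is the number of simple cycles (up to cyclic rotation) of the De Bruijn graph DB(2^m,R), whose node set S^R has cardinality 2^{Rm}. -/

import Mathlib

/-- `s : ZMod N → V` is a closed path of length `N` in the directed graph `Γ`:
every consecutive pair of nodes is an edge of `Γ`. -/
def IsClosedPath {V : Type*} (Γ : V → V → Prop) (N : ℕ) (s : ZMod N → V) : Prop :=
  ∀ i : ZMod N, Γ (s i) (s (i + 1))

/-- A simple cycle of length `k` in `Γ`: a closed path of positive length with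
pairwise distinct nodes. -/
def IsSimpleCycle {V : Type*} (Γ : V → V → Prop) (k : ℕ) (c : ZMod k → V) : Prop :=
  0 < k ∧ IsClosedPath Γ k c ∧ Function.Injective c

/-- The weight matrix `W(s)` of `s : ZMod N → Fin n`: its `(i,j)` entry counts the
number of indices `k` with `(s k, s (k+1)) = (i, j)`. -/
noncomputable def weightMatrix {n : ℕ} (N : ℕ) (s : ZMod N → Fin n) :
    Matrix (Fin n) (Fin n) ℝ :=
  Matrix.of fun i j => (Nat.card {k : ZMod N // s k = i ∧ s (k + 1) = j} : ℝ)

/-- The normalized closed path polytope `p_N(Γ)`: the convex hull of the normalized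
weight matrices `w(s) = W(s)/N` of all closed paths of length `N` in `Γ`. -/
noncomputable def pathPolytope {n : ℕ} (Γ : Fin n → Fin n → Prop) (N : ℕ) :
    Set (Matrix (Fin n) (Fin n) ℝ) :=
  convexHull ℝ
    {M | ∃ s : ZMod N → Fin n, IsClosedPath Γ N s ∧ M = (N : ℝ)⁻¹ • weightMatrix N s}

/-- The normalized cycle polytope `p_*(Γ)`: the convex hull of the normalized weight
matrices `w(c) = W(c)/ℓ(c)` of all simple cycles of `Γ`. -/
noncomputable def cyclePolytope {n : ℕ} (Γ : Fin n → Fin n → Prop) :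
    Set (Matrix (Fin n) (Fin n) ℝ) :=
  convexHull ℝ
    {M | ∃ (k : ℕ) (c : ZMod k → Fin n), IsSimpleCycle Γ k c ∧
      M = (k : ℝ)⁻¹ • weightMatrix k c}

/-- Two (cyclically indexed) tuples of nodes are rotation-equivalent if they have
the same length and one is a cyclic rotation of the other.  This is the
identification used for simple cycles. -/
def RotEquiv {V : Type*} (p q : Σ k : ℕ, ZMod k → V) : Prop :=
  ∃ h : p.1 = q.1, ∃ r : ZMod q.1,
    ∀ i : ZMod q.1, q.2 i = p.2 (cast (congrArg ZMod h.symm) (i + r))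

/-- The type of (representatives of) simple cycles of `Γ`. -/
def SimpleCycleRep {V : Type*} (Γ : V → V → Prop) : Type _ :=
  {p : Σ k : ℕ, ZMod k → V // IsSimpleCycle Γ p.1 p.2}

/-- The number of simple cycles of `Γ`, counted up to cyclic rotation. -/
noncomputable def numCycles {V : Type*} (Γ : V → V → Prop) : ℕ :=
  Nat.card (Quot fun p q : SimpleCycleRep Γ => RotEquiv p.1 q.1)

/-- The single-party correlator vector of a local deterministic strategy
`s : Fin m → Fin 2`: its `x`-th entry is `(-1) ^ (s x)`. -/
noncomputable def chi {m : ℕ} (s : Fin m → Fin 2) : Fin m → ℝ :=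
  fun x => (-1 : ℝ) ^ (s x : ℕ)

/-- The range-`R` correlator vector of a tuple of strategies `u 0, …, u R`:
its first block is `(1/(R+1)) Σ_{j=0}^R χ_{u j}` and its `k`-th matrix block
(`k = 1, …, R`, indexed here by `k : Fin R` standing for `k+1`) is
`(1/(R+1-k)) Σ_{j=0}^{R-k} χ_{u j} ⊗ χ_{u (j+k)}`. -/
noncomputable def tiRVec (m R : ℕ) (u : ℕ → (Fin m → Fin 2)) :
    (Fin m → ℝ) × (Fin R → Fin m → Fin m → ℝ) :=
  (((R : ℝ) + 1)⁻¹ • ∑ j ∈ Finset.range (R + 1), chi (u j),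
   fun k => (((R - (k : ℕ) : ℕ)) : ℝ)⁻¹ •
     ∑ j ∈ Finset.range (R - (k : ℕ)),
       (fun x y => chi (u j) x * chi (u (j + (k : ℕ) + 1)) y : Fin m → Fin m → ℝ))

/-- The TI-`R` local polytope `L^{(N,m,R)}`: the convex hull of the averaged range-`R`
correlator vectors of all strategy assignments `s : ZMod N → S`. -/
noncomputable def tiRPolytope (m R N : ℕ) :
    Set ((Fin m → ℝ) × (Fin R → Fin m → Fin m → ℝ)) :=
  convexHull ℝ
    {v | ∃ s : ZMod N → (Fin m → Fin 2),
      v = (N : ℝ)⁻¹ • ∑ i ∈ Finset.range N,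
        tiRVec m R (fun j => s ((i : ZMod N) + (j : ZMod N)))}

/-- The edge relation of the De Bruijn graph `DB(2^m, R)` on `R`-tuples of
strategies: there is an edge from `a` to `b` iff the last `R-1` entries of `a`
coincide with the first `R-1` entries of `b`. -/
def dbEdge (m R : ℕ) (a b : Fin R → (Fin m → Fin 2)) : Prop :=
  ∀ (j : ℕ) (h : j + 1 < R), b ⟨j, by omega⟩ = a ⟨j + 1, h⟩

/-- The `(R+1)`-tuple of strategies labelling the edge `(a, b)` of the De Bruijn
graph: the entries of `a` followed by the last entry of `b`. -/
def dbEdgeTuple (m R : ℕ) (hR : 0 < R) (a b : Fin R → (Fin m → Fin 2)) :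
    ℕ → (Fin m → Fin 2) :=
  fun j => if h : j < R then a ⟨j, h⟩ else b ⟨R - 1, by omega⟩

namespace TI

variable {V : Type*}

set_option linter.unusedSectionVars false

/-- edge counting matrix of a cyclically indexed walk -/
noncomputable def Ecnt (L : ℕ) (p : ZMod L → V) (a b : V) : ℕ :=
  Nat.card {i : ZMod L // p i = a ∧ p (i + 1) = b}

section counts
variable [Fintype V] [DecidableEq V]

lemma Ecnt_eq_card (L : ℕ) [NeZero L] (p : ZMod L → V) (a b : V) :
    Ecnt L p a b = (Finset.univ.filter (fun i : ZMod L => p i = a ∧ p (i+1) = b)).card := by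
  classical
  rw [Ecnt, Nat.card_eq_fintype_card, Fintype.card_subtype]

lemma sum_edge {β : Type*} [AddCommMonoid β] (L : ℕ) [NeZero L] (p : ZMod L → V)
    (F : V → V → β) :
    ∑ i : ZMod L, F (p i) (p (i + 1)) = ∑ a : V, ∑ b : V, Ecnt L p a b • F a b := by
  classical
  have key : ∑ i : ZMod L, F (p i) (p (i + 1))
      = ∑ y : V × V, Ecnt L p y.1 y.2 • F y.1 y.2 := by
    rw [← Finset.sum_fiberwise (Finset.univ : Finset (ZMod L))
      (fun i => (p i, p (i+1))) (fun i => F (p i) (p (i+1)))]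
    refine Finset.sum_congr rfl (fun y _ => ?_)
    have h1 : ∑ i ∈ Finset.univ.filter (fun i : ZMod L => (p i, p (i+1)) = y),
        F (p i) (p (i+1)) = ∑ _i ∈ Finset.univ.filter
          (fun i : ZMod L => (p i, p (i+1)) = y), F y.1 y.2 := by
      refine Finset.sum_congr rfl (fun i hi => ?_)
      simp only [Finset.mem_filter] at hi
      rw [← hi.2]
    rw [h1, Finset.sum_const, Ecnt_eq_card]
    congr 2
    ext i
    simp [Prod.ext_iff]
  rw [key, Fintype.sum_prod_type]

lemma Ecnt_total (L : ℕ) [NeZero L] (p : ZMod L → V) :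
    ∑ a : V, ∑ b : V, Ecnt L p a b = L := by
  have := sum_edge L p (fun _ _ => (1 : ℕ))
  simp only [smul_eq_mul, mul_one] at this
  rw [← this, Finset.sum_const, Finset.card_univ, ZMod.card, smul_eq_mul, mul_one]

lemma Ecnt_balanced (L : ℕ) [NeZero L] (p : ZMod L → V) (a : V) :
    ∑ b : V, Ecnt L p a b = ∑ b : V, Ecnt L p b a := by
  classical
  have h1 : ∑ b : V, Ecnt L p a b
      = (Finset.univ.filter (fun i : ZMod L => p i = a)).card := by
    simp only [Ecnt_eq_card]
    rw [Finset.card_eq_sum_card_fiberwise (f := fun i : ZMod L => p (i+1))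
      (t := Finset.univ) (fun x _ => Finset.mem_univ _)]
    refine Finset.sum_congr rfl (fun b _ => ?_)
    congr 1
    ext i
    simp [Finset.mem_filter, and_comm, and_assoc]
  have h2 : ∑ b : V, Ecnt L p b a
      = (Finset.univ.filter (fun i : ZMod L => p (i+1) = a)).card := by
    simp only [Ecnt_eq_card]
    rw [Finset.card_eq_sum_card_fiberwise (f := fun i : ZMod L => p i)
      (t := Finset.univ) (fun x _ => Finset.mem_univ _)]
    refine Finset.sum_congr rfl (fun b _ => ?_)
    congr 1
    ext i
    simp [Finset.mem_filter, and_comm]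
  rw [h1, h2]
  apply Finset.card_nbij (fun i => i - 1)
  · intro i hi
    simp only [Finset.mem_coe, Finset.mem_filter, Finset.mem_univ, true_and] at *
    rwa [sub_add_cancel]
  · intro i hi j hj hij
    simpa using hij
  · intro j hj
    simp only [Finset.mem_coe, Finset.mem_filter, Finset.mem_univ, true_and,
      Set.mem_image] at *
    exact ⟨j + 1, hj, by ring⟩

lemma Ecnt_pos_iff (L : ℕ) [NeZero L] (p : ZMod L → V) (a b : V) :
    Ecnt L p a b ≠ 0 ↔ ∃ i, p i = a ∧ p (i+1) = b := by
  rw [Ecnt_eq_card, ← Nat.pos_iff_ne_zero, Finset.card_pos]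
  constructor
  · rintro ⟨i, hi⟩; simp only [Finset.mem_filter] at hi; exact ⟨i, hi.2⟩
  · rintro ⟨i, hi⟩; exact ⟨i, by simp [hi]⟩

end counts

end TI

namespace TI
variable {V : Type*}

def Touch (E : V → V → ℕ) (a : V) : Prop := ∃ x, E a x ≠ 0 ∨ E x a ≠ 0

def Adj (E : V → V → ℕ) (a b : V) : Prop := E a b ≠ 0 ∨ E b a ≠ 0

def Conn (E : V → V → ℕ) : Prop :=
  ∀ a b, Touch E a → Touch E b → Relation.ReflTransGen (Adj E) a b

lemma touch_mono {E E' : V → V → ℕ} (h : ∀ a b, E a b ≤ E' a b) {a : V}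
    (ha : Touch E a) : Touch E' a := by
  obtain ⟨x, hx | hx⟩ := ha
  · exact ⟨x, Or.inl (fun h0 => hx (Nat.le_antisymm (h0 ▸ h a x) (Nat.zero_le _)))⟩
  · exact ⟨x, Or.inr (fun h0 => hx (Nat.le_antisymm (h0 ▸ h x a) (Nat.zero_le _)))⟩

lemma conn_of_support_eq {E E' : V → V → ℕ} (h : ∀ a b, E a b = 0 ↔ E' a b = 0)
    (hc : Conn E) : Conn E' := by
  have hT : ∀ a, Touch E' a → Touch E a := by
    rintro a ⟨x, hx | hx⟩
    · exact ⟨x, Or.inl (fun h0 => hx ((h a x).1 h0))⟩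
    · exact ⟨x, Or.inr (fun h0 => hx ((h x a).1 h0))⟩
  intro a b ha hb
  refine Relation.ReflTransGen.mono ?_ _ _ (hc a b (hT a ha) (hT b hb))
  rintro u v (huv | huv)
  · exact Or.inl (fun h0 => huv ((h u v).2 h0))
  · exact Or.inr (fun h0 => huv ((h v u).2 h0))

section wk
variable [Fintype V] [DecidableEq V]

lemma touch_Ecnt_iff (L : ℕ) [NeZero L] (p : ZMod L → V) (a : V) :
    Touch (Ecnt L p) a ↔ ∃ i, p i = a := by
  constructor
  · rintro ⟨x, hx | hx⟩
    · obtain ⟨i, hi⟩ := (Ecnt_pos_iff L p a x).1 hx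
      exact ⟨i, hi.1⟩
    · obtain ⟨i, hi⟩ := (Ecnt_pos_iff L p x a).1 hx
      exact ⟨i + 1, hi.2⟩
  · rintro ⟨i, rfl⟩
    exact ⟨p (i+1), Or.inl ((Ecnt_pos_iff L p _ _).2 ⟨i, rfl, rfl⟩)⟩

lemma conn_Ecnt (L : ℕ) [NeZero L] (p : ZMod L → V) : Conn (Ecnt L p) := by
  intro a b ha hb
  obtain ⟨i, rfl⟩ := (touch_Ecnt_iff L p a).1 ha
  obtain ⟨j, rfl⟩ := (touch_Ecnt_iff L p b).1 hb
  have key : ∀ t : ℕ, Relation.ReflTransGen (Adj (Ecnt L p)) (p i) (p (i + (t : ZMod L))) := by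
    intro t
    induction t with
    | zero => simpa using Relation.ReflTransGen.refl
    | succ t ih =>
        refine Relation.ReflTransGen.tail ih ?_
        have : (((t:ℕ) + 1 : ℕ) : ZMod L) = (t : ZMod L) + 1 := by push_cast; ring
        rw [this, ← add_assoc]
        exact Or.inl ((Ecnt_pos_iff L p _ _).2 ⟨i + t, rfl, rfl⟩)
  have := key ((j - i).val)
  rwa [ZMod.natCast_val, ZMod.cast_id, add_sub_cancel] at this

end wk
end TI

namespace TI
variable {V : Type*}

lemma Ecnt_rot (L : ℕ) (p : ZMod L → V) (r : ZMod L) (a b : V) :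
    Ecnt L (fun z => p (z + r)) a b = Ecnt L p a b := by
  refine Nat.card_congr (Equiv.subtypeEquiv (Equiv.addRight r) (fun i => ?_))
  simp only [Equiv.coe_addRight]
  constructor
  · rintro ⟨h1, h2⟩; exact ⟨h1, by rwa [add_right_comm]⟩
  · rintro ⟨h1, h2⟩; exact ⟨h1, by rwa [add_right_comm] at h2⟩

/-- the cycle quotient -/
def SCQ (Γ : V → V → Prop) : Type _ :=
  Quot fun p q : SimpleCycleRep Γ => RotEquiv p.1 q.1

variable {Γ : V → V → Prop}

lemma rotEquiv_len {p q : SimpleCycleRep Γ} (h : RotEquiv p.1 q.1) : p.1.1 = q.1.1 := h.1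

noncomputable def SCQ.len (q : SCQ Γ) : ℕ :=
  Quot.lift (fun c : SimpleCycleRep Γ => c.1.1) (fun _ _ h => rotEquiv_len h) q

noncomputable def SCQ.mat (q : SCQ Γ) : V → V → ℕ :=
  Quot.lift (fun c : SimpleCycleRep Γ => Ecnt c.1.1 c.1.2) (by
    rintro ⟨⟨k₁, c₁⟩, hc₁⟩ ⟨⟨k₂, c₂⟩, hc₂⟩ ⟨h, r, hr⟩
    have h' : k₁ = k₂ := h
    subst h'
    have hr' : ∀ i : ZMod k₁, c₂ i = c₁ (i + r) := by
      intro i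
      have := hr i
      simp only at this
      rw [this]
      exact congrArg c₁ (eq_of_heq (cast_heq _ _))
    show Ecnt k₁ c₁ = Ecnt k₁ c₂
    funext a b
    have : c₂ = fun i => c₁ (i + r) := funext hr'
    rw [this, Ecnt_rot]) q

lemma SCQ.exists_rep (q : SCQ Γ) :
    ∃ (k : ℕ) (c : ZMod k → V), IsSimpleCycle Γ k c ∧ q.len = k ∧
      q.mat = Ecnt k c := by
  obtain ⟨⟨⟨k, c⟩, hc⟩, rfl⟩ := Quot.exists_rep q
  exact ⟨k, c, hc, rfl, rfl⟩

lemma SCQ.len_pos (q : SCQ Γ) : 0 < q.len := by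
  obtain ⟨k, c, hc, hl, -⟩ := q.exists_rep
  exact hl ▸ hc.1

section fin
variable [Fintype V] [DecidableEq V]

lemma SCQ.len_le (q : SCQ Γ) : q.len ≤ Fintype.card V := by
  obtain ⟨k, c, hc, hl, -⟩ := q.exists_rep
  subst hl
  haveI : NeZero q.len := ⟨Nat.pos_iff_ne_zero.1 hc.1⟩
  calc q.len = Fintype.card (ZMod q.len) := (ZMod.card _).symm
    _ ≤ Fintype.card V := Fintype.card_le_of_injective c hc.2.2

lemma SCQ.mat_total (q : SCQ Γ) : ∑ a : V, ∑ b : V, q.mat a b = q.len := by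
  obtain ⟨k, c, hc, hl, hm⟩ := q.exists_rep
  haveI : NeZero k := ⟨Nat.pos_iff_ne_zero.1 hc.1⟩
  rw [hm, hl, Ecnt_total]

lemma SCQ.mat_balanced (q : SCQ Γ) (a : V) :
    ∑ b : V, q.mat a b = ∑ b : V, q.mat b a := by
  obtain ⟨k, c, hc, hl, hm⟩ := q.exists_rep
  haveI : NeZero k := ⟨Nat.pos_iff_ne_zero.1 hc.1⟩
  rw [hm]; exact Ecnt_balanced k c a

lemma SCQ.mat_supported (q : SCQ Γ) (a b : V) (h : q.mat a b ≠ 0) : Γ a b := by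
  obtain ⟨k, c, hc, hl, hm⟩ := q.exists_rep
  haveI : NeZero k := ⟨Nat.pos_iff_ne_zero.1 hc.1⟩
  rw [hm] at h
  obtain ⟨i, h1, h2⟩ := (Ecnt_pos_iff k c a b).1 h
  exact h1 ▸ h2 ▸ hc.2.1 i

lemma SCQ.conn (q : SCQ Γ) : Conn q.mat := by
  obtain ⟨k, c, hc, hl, hm⟩ := q.exists_rep
  haveI : NeZero k := ⟨Nat.pos_iff_ne_zero.1 hc.1⟩
  rw [hm]; exact conn_Ecnt k c

lemma SCQ.mat_le_one (q : SCQ Γ) (a b : V) : q.mat a b ≤ 1 := by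
  obtain ⟨k, c, hc, hl, hm⟩ := q.exists_rep
  haveI : NeZero k := ⟨Nat.pos_iff_ne_zero.1 hc.1⟩
  rw [hm, Ecnt_eq_card]
  refine Finset.card_le_one.2 ?_
  rintro i hi j hj
  simp only [Finset.mem_filter] at hi hj
  exact hc.2.2 (hi.2.1.trans hj.2.1.symm)

noncomputable instance : Fintype (SCQ Γ) := by
  classical
  have : Finite (SimpleCycleRep Γ) := by
    have hlen : ∀ c : SimpleCycleRep Γ, c.1.1 < Fintype.card V + 1 := by
      intro c
      have h1 : 0 < c.1.1 := c.2.1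
      haveI : NeZero c.1.1 := ⟨Nat.pos_iff_ne_zero.1 h1⟩
      have := Fintype.card_le_of_injective c.1.2 c.2.2.2
      rw [ZMod.card] at this
      omega
    let f : SimpleCycleRep Γ → (Fin (Fintype.card V + 1)) × (Fin (Fintype.card V) → V) :=
      fun c => ⟨⟨c.1.1, hlen c⟩, fun t => c.1.2 ((t : ℕ) : ZMod c.1.1)⟩
    have hf : Function.Injective f := by
      rintro ⟨⟨k₁, c₁⟩, h₁⟩ ⟨⟨k₂, c₂⟩, h₂⟩ h
      simp only [f, Prod.mk.injEq, Fin.mk.injEq] at h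
      obtain ⟨h1, h2⟩ := h
      subst h1
      refine Subtype.ext (Sigma.ext rfl (heq_of_eq (funext fun z => ?_)))
      haveI : NeZero k₁ := ⟨Nat.pos_iff_ne_zero.1 h₁.1⟩
      have hz : z.val < Fintype.card V := by
        have h3 : k₁ ≤ Fintype.card V := by
          have := Fintype.card_le_of_injective c₁ h₁.2.2
          rwa [ZMod.card] at this
        have h4 : z.val < k₁ := z.val_lt
        omega
      have := congrFun h2 ⟨z.val, hz⟩
      simpa [ZMod.natCast_val, ZMod.cast_id] using this
    exact Finite.of_injective f hf
  have : Finite (SCQ Γ) := Quot.finite _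
  exact Fintype.ofFinite _

end fin
end TI

namespace TI
variable {V : Type*} [Fintype V] [DecidableEq V] {Γ : V → V → Prop}

lemma exists_next (E : V → V → ℕ) (hbal : ∀ a, ∑ b : V, E a b = ∑ b : V, E b a)
    (a : V) (ha : ∃ x, E x a ≠ 0) : ∃ b, E a b ≠ 0 := by
  obtain ⟨x, hx⟩ := ha
  by_contra h
  push_neg at h
  have h1 : ∑ b : V, E a b = 0 := by simp [h]
  have h2 : E x a ≤ ∑ b : V, E b a :=
    Finset.single_le_sum (f := fun b => E b a) (fun _ _ => Nat.zero_le _) (Finset.mem_univ x)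
  rw [← hbal, h1, Nat.le_zero] at h2
  exact hx h2

lemma exists_cycle_le (E : V → V → ℕ) (hbal : ∀ a, ∑ b : V, E a b = ∑ b : V, E b a)
    (hsup : ∀ a b, E a b ≠ 0 → Γ a b) {a₀ b₀ : V} (h₀ : E a₀ b₀ ≠ 0) :
    ∃ q : SCQ Γ, ∀ a b, q.mat a b ≤ E a b := by
  classical
  -- infinite forward walk
  let f : ℕ → {a : V // ∃ x, E x a ≠ 0} := fun n => Nat.rec ⟨b₀, a₀, h₀⟩
    (fun _ p => ⟨Classical.choose (exists_next E hbal p.1 p.2),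
      ⟨p.1, Classical.choose_spec (exists_next E hbal p.1 p.2)⟩⟩) n
  let v : ℕ → V := fun n => (f n).1
  have hstep : ∀ n, E (v n) (v (n + 1)) ≠ 0 := fun n =>
    Classical.choose_spec (exists_next E hbal (f n).1 (f n).2)
  -- find a minimal repetition
  have hex : ∃ n, ∃ i', i' < n ∧ v i' = v n := by
    obtain ⟨i, j, hne, heq⟩ := Finite.exists_ne_map_eq_of_infinite v
    rcases lt_or_gt_of_ne hne with h | h
    · exact ⟨j, i, h, heq⟩
    · exact ⟨i, j, h, heq.symm⟩
  let j₀ := Nat.find hex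
  obtain ⟨i₀, hij, hv⟩ : ∃ i', i' < j₀ ∧ v i' = v j₀ := Nat.find_spec hex
  have hinj : ∀ s t, i₀ ≤ s → s < t → t < j₀ → v s ≠ v t := by
    intro s t hs hst htj heq
    exact Nat.find_min hex htj ⟨s, hst, heq⟩
  set L := j₀ - i₀ with hLdef
  have hL : 0 < L := by omega
  haveI : NeZero L := ⟨Nat.pos_iff_ne_zero.1 hL⟩
  let c : ZMod L → V := fun z => v (i₀ + z.val)
  have hvalbound : ∀ z : ZMod L, z.val < L := fun z => ZMod.val_lt z
  have hval1 : ∀ z : ZMod L, (z + 1).val = (z.val + 1) % L := by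
    intro z
    rw [ZMod.val_add, ZMod.val_one_eq_one_mod, Nat.add_mod_mod]
  have hedge : ∀ z : ZMod L, E (c z) (c (z + 1)) ≠ 0 := by
    intro z
    have hz := hvalbound z
    by_cases hzl : z.val + 1 < L
    · have : c (z + 1) = v (i₀ + z.val + 1) := by
        show v _ = _
        rw [hval1 z, Nat.mod_eq_of_lt hzl, ← Nat.add_assoc]
      rw [this]
      exact hstep (i₀ + z.val)
    · have hzeq : z.val + 1 = L := by omega
      have h1 : c (z + 1) = v i₀ := by
        show v _ = _
        rw [hval1 z, hzeq, Nat.mod_self, Nat.add_zero]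
      have h2 : i₀ + z.val + 1 = j₀ := by omega
      rw [h1, hv]
      have := hstep (i₀ + z.val)
      rwa [h2] at this
  have hclosed : IsClosedPath Γ L c := fun z => hsup _ _ (hedge z)
  have hcinj : Function.Injective c := by
    intro z w heq
    have hz := hvalbound z
    have hw := hvalbound w
    have : z.val = w.val := by
      by_contra hne
      rcases Nat.lt_or_ge z.val w.val with h | h
      · exact hinj (i₀ + z.val) (i₀ + w.val) (Nat.le_add_right _ _)
          (by omega) (by omega) heq
      · have h' : w.val < z.val := by omega
        exact hinj (i₀ + w.val) (i₀ + z.val) (Nat.le_add_right _ _)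
          (by omega) (by omega) heq.symm
    exact ZMod.val_injective L this
  refine ⟨Quot.mk _ ⟨⟨L, c⟩, hL, hclosed, hcinj⟩, ?_⟩
  intro a b
  set q : SCQ Γ := Quot.mk _ ⟨⟨L, c⟩, hL, hclosed, hcinj⟩ with hq
  have hmat : q.mat = Ecnt L c := rfl
  by_cases h : Ecnt L c a b = 0
  · rw [hmat, h]; exact Nat.zero_le _
  · obtain ⟨i, hi1, hi2⟩ := (Ecnt_pos_iff L c a b).1 h
    have hE : E a b ≠ 0 := hi1 ▸ hi2 ▸ hedge i
    calc q.mat a b ≤ 1 := q.mat_le_one a b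
      _ ≤ E a b := Nat.one_le_iff_ne_zero.2 hE

end TI

namespace TI
variable {V : Type*} [Fintype V] [DecidableEq V] {Γ : V → V → Prop}

lemma decompose (E : V → V → ℕ) (hbal : ∀ a, ∑ b : V, E a b = ∑ b : V, E b a)
    (hsup : ∀ a b, E a b ≠ 0 → Γ a b) :
    ∃ k : SCQ Γ → ℕ, ∀ a b, E a b = ∑ q : SCQ Γ, k q * SCQ.mat q a b := by
  classical
  generalize hM : (∑ a : V, ∑ b : V, E a b) = M
  induction M using Nat.strong_induction_on generalizing E with
  | _ M ih =>
    by_cases hE : ∀ a b, E a b = 0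
    · exact ⟨0, fun a b => by simp [hE]⟩
    · push_neg at hE
      obtain ⟨a₀, b₀, h₀⟩ := hE
      obtain ⟨q₀, hq₀⟩ := exists_cycle_le E hbal hsup h₀
      set E' : V → V → ℕ := fun a b => E a b - q₀.mat a b with hE'def
      have hsub : ∀ a, ∑ b : V, E' a b = ∑ b : V, E a b - ∑ b : V, q₀.mat a b := by
        intro a
        exact Finset.sum_tsub_distrib _ (fun b _ => hq₀ a b)
      have hsub' : ∀ a, ∑ b : V, E' b a = ∑ b : V, E b a - ∑ b : V, q₀.mat b a := by
        intro a
        exact Finset.sum_tsub_distrib _ (fun b _ => hq₀ b a)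
      have hbal' : ∀ a, ∑ b : V, E' a b = ∑ b : V, E' b a := by
        intro a
        rw [hsub, hsub', hbal, q₀.mat_balanced]
      have hsup' : ∀ a b, E' a b ≠ 0 → Γ a b := by
        intro a b h
        exact hsup a b (fun h0 => h (by simp [hE'def, h0]))
      have htot : ∑ a : V, ∑ b : V, E' a b = M - q₀.len := by
        rw [← hM, ← q₀.mat_total]
        rw [Finset.sum_congr rfl (fun a _ => hsub a)]
        exact Finset.sum_tsub_distrib _ (fun a _ =>
          Finset.sum_le_sum (fun b _ => hq₀ a b))
      have hlt : M - q₀.len < M := by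
        have h1 := q₀.len_pos
        have h2 : q₀.len ≤ M := by
          rw [← hM, ← q₀.mat_total]
          exact Finset.sum_le_sum (fun a _ => Finset.sum_le_sum (fun b _ => hq₀ a b))
        omega
      obtain ⟨k', hk'⟩ := ih (M - q₀.len) hlt E' hbal' hsup' htot
      refine ⟨fun q => k' q + if q = q₀ then 1 else 0, fun a b => ?_⟩
      have : E a b = E' a b + q₀.mat a b := (tsub_add_cancel_of_le (hq₀ a b)).symm
      rw [this, hk' a b]
      rw [Finset.sum_congr rfl (fun q _ => add_mul (k' q) _ (SCQ.mat q a b)),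
        Finset.sum_add_distrib]
      congr 1
      rw [Finset.sum_congr rfl (fun q _ => ite_mul (q = q₀) 1 0 (SCQ.mat q a b))]
      simp [Finset.sum_ite_eq']

end TI

namespace TI
variable {V : Type*} [Fintype V] [DecidableEq V] {Γ : V → V → Prop}

lemma isClosedPath_rot {L : ℕ} (p : ZMod L → V) (r : ZMod L)
    (hp : IsClosedPath Γ L p) : IsClosedPath Γ L (fun z => p (z + r)) := by
  intro z
  have := hp (z + r)
  simpa [add_right_comm] using this

lemma insert_cycle {N L : ℕ} [NeZero N] [NeZero L] (p : ZMod N → V) (c : ZMod L → V)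
    (hp : IsClosedPath Γ N p) (hc : IsClosedPath Γ L c) (hshare : p 0 = c 0) :
    ∃ p' : ZMod (N + L) → V, IsClosedPath Γ (N + L) p' ∧
      ∀ a b, Ecnt (N + L) p' a b = Ecnt N p a b + Ecnt L c a b := by
  classical
  have hN : 0 < N := Nat.pos_of_ne_zero (NeZero.ne N)
  have hL : 0 < L := Nat.pos_of_ne_zero (NeZero.ne L)
  haveI : NeZero (N + L) := ⟨by omega⟩
  set w : ℕ → V := fun t => if t < N then p (t : ZMod N) else c ((t - N : ℕ) : ZMod L) with hw
  set p' : ZMod (N + L) → V := fun z => w z.val with hp'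
  have hval : ∀ z : ZMod (N + L), (z + 1).val = (z.val + 1) % (N + L) := by
    intro z
    rw [ZMod.val_add, ZMod.val_one_eq_one_mod, Nat.add_mod_mod]
  have hvlt : ∀ z : ZMod (N + L), z.val < N + L := fun z => ZMod.val_lt z
  have pairEq : ∀ z : ZMod (N + L),
      (p' z, p' (z + 1)) = if z.val < N
        then (p (z.val : ZMod N), p ((z.val : ZMod N) + 1))
        else (c ((z.val - N : ℕ) : ZMod L), c (((z.val - N : ℕ) : ZMod L) + 1)) := by
    intro z
    set t := z.val with ht
    have htlt : t < N + L := hvlt z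
    have h1 : p' z = w t := rfl
    have h2 : p' (z + 1) = w ((t + 1) % (N + L)) := by rw [hp']; simp only; rw [hval]
    by_cases hcase : t < N
    · rw [if_pos hcase]
      have hpz : p' z = p (t : ZMod N) := by rw [h1, hw]; simp only [if_pos hcase]
      rcases Nat.lt_or_ge (t + 1) N with h3 | h3
      · have hmod : (t + 1) % (N + L) = t + 1 := Nat.mod_eq_of_lt (by omega)
        have : p' (z + 1) = p ((t + 1 : ℕ) : ZMod N) := by
          rw [h2, hmod, hw]; simp only [if_pos h3]
        rw [hpz, this, Prod.mk.injEq]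
        refine ⟨rfl, by push_cast; ring_nf⟩
      · -- t + 1 = N
        have hteq : t + 1 = N := by omega
        have hmod : (t + 1) % (N + L) = N := by rw [hteq]; exact Nat.mod_eq_of_lt (by omega)
        have : p' (z + 1) = c ((0 : ℕ) : ZMod L) := by
          rw [h2, hmod, hw]; simp only [Nat.lt_irrefl, if_neg, Nat.sub_self]
          congr 1
        rw [hpz, this, Prod.mk.injEq]
        refine ⟨rfl, ?_⟩
        have : ((t : ZMod N) + 1) = ((t + 1 : ℕ) : ZMod N) := by push_cast; ring
        rw [this, hteq, ZMod.natCast_self]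
        simpa using (hshare.symm)
    · rw [if_neg hcase]
      push_neg at hcase
      have hpz : p' z = c ((t - N : ℕ) : ZMod L) := by
        rw [h1, hw]; simp only [if_neg (by omega : ¬ t < N)]
      rcases Nat.lt_or_ge (t + 1) (N + L) with h3 | h3
      · have hmod : (t + 1) % (N + L) = t + 1 := Nat.mod_eq_of_lt h3
        have : p' (z + 1) = c ((t + 1 - N : ℕ) : ZMod L) := by
          rw [h2, hmod, hw]; simp only [if_neg (by omega : ¬ t + 1 < N)]
        rw [hpz, this, Prod.mk.injEq]
        refine ⟨rfl, ?_⟩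
        have : (t + 1 - N : ℕ) = (t - N) + 1 := by omega
        rw [this]; push_cast; ring
      · -- t + 1 = N + L
        have hteq : t + 1 = N + L := by omega
        have hmod : (t + 1) % (N + L) = 0 := by rw [hteq, Nat.mod_self]
        have : p' (z + 1) = p ((0 : ℕ) : ZMod N) := by
          rw [h2, hmod, hw]; simp only [if_pos hN]
        rw [hpz, this, Prod.mk.injEq]
        refine ⟨rfl, ?_⟩
        have htN : t - N = L - 1 := by omega
        have : ((t - N : ℕ) : ZMod L) + 1 = ((t - N + 1 : ℕ) : ZMod L) := by push_cast; ring
        rw [this, htN]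
        have : (L - 1 + 1 : ℕ) = L := by omega
        rw [this, ZMod.natCast_self]
        simp only [Nat.cast_zero]
        exact hshare
  refine ⟨p', ?_, ?_⟩
  · intro z
    have := pairEq z
    by_cases hcase : z.val < N
    · rw [if_pos hcase] at this
      have h1 : p' z = p (z.val : ZMod N) := congrArg Prod.fst this
      have h2 : p' (z + 1) = p ((z.val : ZMod N) + 1) := congrArg Prod.snd this
      rw [h1, h2]; exact hp _
    · rw [if_neg hcase] at this
      have h1 := congrArg Prod.fst this
      have h2 := congrArg Prod.snd this
      simp only at h1 h2
      rw [h1, h2]; exact hc _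
  · intro a b
    rw [Ecnt_eq_card, Ecnt_eq_card, Ecnt_eq_card]
    have hsplit :
        (Finset.univ.filter (fun z : ZMod (N+L) => p' z = a ∧ p' (z+1) = b)).card
        = ((Finset.univ.filter (fun z : ZMod (N+L) => p' z = a ∧ p' (z+1) = b)).filter
            (fun z => z.val < N)).card
          + ((Finset.univ.filter (fun z : ZMod (N+L) => p' z = a ∧ p' (z+1) = b)).filter
            (fun z => ¬ z.val < N)).card :=
      (Finset.card_filter_add_card_filter_not _).symm
    rw [hsplit]
    congr 1
    · -- first part: bijection with ZMod N
      apply Finset.card_nbij' (i := fun z => ((z.val : ℕ) : ZMod N))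
        (j := fun z => ((z.val : ℕ) : ZMod (N + L)))
      · intro z hz
        simp only [Finset.coe_filter, Set.mem_setOf_eq, Finset.mem_filter, Finset.mem_univ, true_and] at hz ⊢
        obtain ⟨⟨h1, h2⟩, h3⟩ := hz
        have := pairEq z
        rw [if_pos h3] at this
        have e1 := congrArg Prod.fst this
        have e2 := congrArg Prod.snd this
        simp only at e1 e2
        exact ⟨e1 ▸ h1, e2 ▸ h2⟩
      · intro z hz
        simp only [Finset.coe_filter, Set.mem_setOf_eq, Finset.mem_filter, Finset.mem_univ, true_and] at hz ⊢
        obtain ⟨h1, h2⟩ := hz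
        have hzv : z.val < N := ZMod.val_lt z
        have hvv : ((z.val : ℕ) : ZMod (N+L)).val = z.val := ZMod.val_natCast_of_lt (by omega)
        have hc1 : (((z.val : ℕ) : ZMod (N+L)).val : ZMod N) = z := by
          rw [hvv, ZMod.natCast_val, ZMod.cast_id]
        refine ⟨⟨?_, ?_⟩, by rw [hvv]; omega⟩
        · have := pairEq ((z.val : ℕ) : ZMod (N+L))
          rw [if_pos (by rw [hvv]; omega)] at this
          have e1 := congrArg Prod.fst this
          simp only at e1
          rw [e1, hc1]; exact h1
        · have := pairEq ((z.val : ℕ) : ZMod (N+L))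
          rw [if_pos (by rw [hvv]; omega)] at this
          have e2 := congrArg Prod.snd this
          simp only at e2
          rw [e2, hc1]; exact h2
      · intro z hz
        simp only [Finset.mem_coe, Finset.mem_filter] at hz
        have h3 := hz.2
        beta_reduce
        rw [ZMod.val_natCast_of_lt h3, ZMod.natCast_val, ZMod.cast_id]
      · intro z hz
        have hzv : z.val < N := ZMod.val_lt z
        beta_reduce
        rw [ZMod.val_natCast_of_lt (by omega : z.val < N + L), ZMod.natCast_val, ZMod.cast_id]
    · -- second part: bijection with ZMod L
      apply Finset.card_nbij' (i := fun z => ((z.val - N : ℕ) : ZMod L))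
        (j := fun z => ((N + z.val : ℕ) : ZMod (N + L)))
      · intro z hz
        simp only [Finset.coe_filter, Set.mem_setOf_eq, Finset.mem_filter, Finset.mem_univ, true_and] at hz ⊢
        obtain ⟨⟨h1, h2⟩, h3⟩ := hz
        have := pairEq z
        rw [if_neg h3] at this
        have e1 := congrArg Prod.fst this
        have e2 := congrArg Prod.snd this
        simp only at e1 e2
        exact ⟨e1 ▸ h1, e2 ▸ h2⟩
      · intro z hz
        simp only [Finset.coe_filter, Set.mem_setOf_eq, Finset.mem_filter, Finset.mem_univ, true_and] at hz ⊢
        obtain ⟨h1, h2⟩ := hz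
        have hzv : z.val < L := ZMod.val_lt z
        have hvv : (((N + z.val : ℕ)) : ZMod (N+L)).val = N + z.val :=
          ZMod.val_natCast_of_lt (by omega)
        have hc1 : (((((N + z.val : ℕ)) : ZMod (N+L)).val - N : ℕ) : ZMod L) = z := by
          rw [hvv]
          have : N + z.val - N = z.val := by omega
          rw [this, ZMod.natCast_val, ZMod.cast_id]
        refine ⟨⟨?_, ?_⟩, by rw [hvv]; omega⟩
        · have := pairEq (((N + z.val : ℕ)) : ZMod (N+L))
          rw [if_neg (by rw [hvv]; omega)] at this
          have e1 := congrArg Prod.fst this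
          simp only at e1
          rw [e1, hc1]; exact h1
        · have := pairEq (((N + z.val : ℕ)) : ZMod (N+L))
          rw [if_neg (by rw [hvv]; omega)] at this
          have e2 := congrArg Prod.snd this
          simp only at e2
          rw [e2, hc1]; exact h2
      · intro z hz
        simp only [Finset.mem_coe, Finset.mem_filter] at hz
        have h3 := hz.2
        beta_reduce
        push_neg at h3
        have hzv : z.val < N + L := ZMod.val_lt z
        have : ((z.val - N : ℕ) : ZMod L).val = z.val - N :=
          ZMod.val_natCast_of_lt (by omega)
        rw [this]
        have : N + (z.val - N) = z.val := by omega
        rw [this, ZMod.natCast_val, ZMod.cast_id]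
      · intro z hz
        have hzv : z.val < L := ZMod.val_lt z
        have hvv : (((N + z.val : ℕ)) : ZMod (N+L)).val = N + z.val :=
          ZMod.val_natCast_of_lt (by omega)
        beta_reduce
        rw [hvv]
        have : N + z.val - N = z.val := by omega
        rw [this, ZMod.natCast_val, ZMod.cast_id]

end TI

namespace TI
variable {V : Type*} [Fintype V] [DecidableEq V] {Γ : V → V → Prop}

/-- total edge-count matrix of a cycle multiset -/
noncomputable def EK (k : SCQ Γ → ℕ) : V → V → ℕ := fun a b => ∑ q : SCQ Γ, k q * SCQ.mat q a b

lemma insert_cycle' {N L : ℕ} [NeZero N] [NeZero L] (p : ZMod N → V) (c : ZMod L → V)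
    (hp : IsClosedPath Γ N p) (hc : IsClosedPath Γ L c) (z₀ : ZMod N) (i₀ : ZMod L)
    (hshare : p z₀ = c i₀) :
    ∃ p' : ZMod (N + L) → V, IsClosedPath Γ (N + L) p' ∧
      ∀ a b, Ecnt (N + L) p' a b = Ecnt N p a b + Ecnt L c a b := by
  obtain ⟨p', h1, h2⟩ := insert_cycle (fun z => p (z + z₀)) (fun i => c (i + i₀))
    (isClosedPath_rot p z₀ hp) (isClosedPath_rot c i₀ hc) (by simpa using hshare)
  exact ⟨p', h1, fun a b => by rw [h2 a b, Ecnt_rot, Ecnt_rot]⟩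

lemma path_cast {L L' : ℕ} (h : L = L') {p : ZMod L → V} (hp : IsClosedPath Γ L p) :
    ∃ p' : ZMod L' → V, IsClosedPath Γ L' p' ∧ ∀ a b, Ecnt L' p' a b = Ecnt L p a b := by
  subst h; exact ⟨p, hp, fun _ _ => rfl⟩

def Realizable (j : SCQ Γ → ℕ) : Prop :=
  ∃ p : ZMod (∑ q : SCQ Γ, j q * SCQ.len q) → V,
    IsClosedPath Γ _ p ∧ ∀ a b, Ecnt _ p a b = EK j a b

open Classical in
lemma EK_single (q₀ : SCQ Γ) (n : ℕ) (a b : V) :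
    EK (fun q => if q = q₀ then n else 0) a b = n * SCQ.mat q₀ a b := by
  rw [EK, Finset.sum_congr rfl (fun q _ => ite_mul _ _ _ _)]
  simp only [zero_mul]
  rw [Finset.sum_ite_eq']
  simp

open Classical in
lemma sum_single_mul (q₀ : SCQ Γ) (n : ℕ) (g : SCQ Γ → ℕ) :
    ∑ q : SCQ Γ, (if q = q₀ then n else 0) * g q = n * g q₀ := by
  rw [Finset.sum_congr rfl (fun q _ => ite_mul _ _ _ _)]
  simp only [zero_mul]
  rw [Finset.sum_ite_eq']
  simp

open Classical in
lemma realizable_single (q₀ : SCQ Γ) : Realizable (fun q => if q = q₀ then 1 else 0) := by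
  obtain ⟨L, c, hc, hlen, hmat⟩ := q₀.exists_rep
  have htot : L = ∑ q : SCQ Γ, (if q = q₀ then 1 else 0) * SCQ.len q := by
    rw [sum_single_mul, one_mul, ← hlen]
  obtain ⟨p', h1, h2⟩ := path_cast htot hc.2.1
  refine ⟨p', h1, fun a b => ?_⟩
  rw [h2 a b, EK_single, one_mul, hmat]

open Classical in
lemma realizable_step (j : SCQ Γ → ℕ) (hj : j ≠ 0) (hreal : Realizable j) (q : SCQ Γ)
    (hsh : ∃ a, Touch (SCQ.mat q) a ∧ Touch (EK j) a) :
    Realizable (fun q' => j q' + if q' = q then 1 else 0) := by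
  classical
  obtain ⟨p, hp, hcnt⟩ := hreal
  have hMpos : 0 < ∑ q' : SCQ Γ, j q' * SCQ.len q' := by
    obtain ⟨q₁, hq₁⟩ : ∃ q₁, j q₁ ≠ 0 := by
      by_contra h; push_neg at h; exact hj (funext h)
    have h1 : j q₁ * SCQ.len q₁ ≤ ∑ q' : SCQ Γ, j q' * SCQ.len q' := Finset.single_le_sum
      (f := fun q' => j q' * SCQ.len q') (fun _ _ => Nat.zero_le _) (Finset.mem_univ q₁)
    have := SCQ.len_pos q₁
    have := Nat.pos_of_ne_zero hq₁
    nlinarith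
  haveI : NeZero (∑ q' : SCQ Γ, j q' * SCQ.len q') := ⟨Nat.pos_iff_ne_zero.1 hMpos⟩
  obtain ⟨a, hta, htb⟩ := hsh
  obtain ⟨L, c, hc, hlen, hmat⟩ := q.exists_rep
  haveI : NeZero L := ⟨Nat.pos_iff_ne_zero.1 hc.1⟩
  have htc : Touch (Ecnt L c) a := by rw [← hmat]; exact hta
  obtain ⟨i₀, hi₀⟩ := (touch_Ecnt_iff L c a).1 htc
  have htp : Touch (Ecnt _ p) a := by
    obtain ⟨x, hx | hx⟩ := htb
    · exact ⟨x, Or.inl (by rw [hcnt]; exact hx)⟩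
    · exact ⟨x, Or.inr (by rw [hcnt]; exact hx)⟩
  obtain ⟨z₀, hz₀⟩ := (touch_Ecnt_iff _ p a).1 htp
  obtain ⟨p', h1, h2⟩ := insert_cycle' p c hp hc.2.1 z₀ i₀ (by rw [hz₀, hi₀])
  have hlen' : (∑ q' : SCQ Γ, j q' * SCQ.len q') + L
      = ∑ q' : SCQ Γ, (j q' + if q' = q then 1 else 0) * SCQ.len q' := by
    rw [Finset.sum_congr rfl (fun q' _ => add_mul (j q') _ (SCQ.len q')),
      Finset.sum_add_distrib, sum_single_mul, one_mul, hlen]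
  obtain ⟨p'', h1', h2'⟩ := path_cast hlen' h1
  refine ⟨p'', h1', fun x y => ?_⟩
  rw [h2' x y, h2 x y, hcnt x y]
  have hEK : EK (fun q' => j q' + if q' = q then 1 else 0) x y
      = EK j x y + SCQ.mat q x y := by
    rw [EK, EK, Finset.sum_congr rfl (fun q' _ => add_mul (j q') _ (SCQ.mat q' x y)),
      Finset.sum_add_distrib, sum_single_mul, one_mul]
  rw [hEK, hmat]

lemma crossing {r : V → V → Prop} {A : V → Prop} {a b : V}
    (h : Relation.ReflTransGen r a b) (ha : A a) (hb : ¬ A b) :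
    ∃ u v, A u ∧ ¬ A v ∧ r u v := by
  induction h with
  | refl => exact absurd ha hb
  | tail h₁ step ih =>
      rename_i u v
      by_cases hu : A u
      · exact ⟨u, v, hu, hb, step⟩
      · obtain ⟨x, y, hx, hy, hr⟩ := ih hu
        exact ⟨x, y, hx, hy, hr⟩

open Classical in
lemma euler (k : SCQ Γ → ℕ) (hk : k ≠ 0) (hconn : Conn (EK k)) : Realizable k := by
  classical
  set S : Set (SCQ Γ → ℕ) := {j | j ≤ k ∧ j ≠ 0 ∧ Realizable j} with hS
  have hSfin : S.Finite := by
    refine (Set.finite_Icc (0 : SCQ Γ → ℕ) k).subset ?_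
    rintro j ⟨h1, -, -⟩
    exact ⟨fun q => Nat.zero_le _, h1⟩
  have hSne : S.Nonempty := by
    obtain ⟨q₀, hq₀⟩ : ∃ q₀, k q₀ ≠ 0 := by
      by_contra h; push_neg at h; exact hk (funext h)
    refine ⟨fun q => if q = q₀ then 1 else 0, ⟨?_, ?_, realizable_single q₀⟩⟩
    · intro q
      by_cases h : q = q₀
      · subst h
        show (if q = q then 1 else 0) ≤ k q
        rw [if_pos rfl]; omega
      · simp [h]
    · intro h
      have := congrFun h q₀
      simp at this
  obtain ⟨j, hjS, hjmax⟩ := Set.Finite.exists_maximalFor (fun j => ∑ q : SCQ Γ, j q) S hSfin hSne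
  obtain ⟨hjk, hjne, hjreal⟩ := hjS
  by_cases hjeq : j = k
  · exact hjeq ▸ hjreal
  -- otherwise find an insertable cycle, contradiction with maximality
  exfalso
  have hclaim : ∃ q, j q < k q ∧ ∃ a, Touch (SCQ.mat q) a ∧ Touch (EK j) a := by
    by_contra hno
    push_neg at hno
    -- hno : ∀ q, j q < k q → ∀ a, Touch (mat q) a → ¬ Touch (EK j) a
    obtain ⟨q₁, hq₁⟩ : ∃ q₁, j q₁ < k q₁ := by
      by_contra h; push_neg at h
      exact hjeq (le_antisymm hjk h)
    obtain ⟨x₁, y₁, hxy₁⟩ : ∃ x y, SCQ.mat q₁ x y ≠ 0 := by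
      by_contra h; push_neg at h
      have := q₁.mat_total
      have h2 : ∑ a : V, ∑ b : V, SCQ.mat q₁ a b = 0 := by simp [h]
      have := q₁.len_pos
      omega
    have hb₁ : Touch (SCQ.mat q₁) x₁ := ⟨y₁, Or.inl hxy₁⟩
    have hb₁n : ¬ Touch (EK j) x₁ := hno q₁ hq₁ x₁ hb₁
    obtain ⟨x₀, y₀, hxy₀⟩ : ∃ x y, EK j x y ≠ 0 := by
      by_contra h; push_neg at h
      apply hjne
      funext q
      by_contra hq
      obtain ⟨x, y, hxy⟩ : ∃ x y, SCQ.mat q x y ≠ 0 := by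
        by_contra h'; push_neg at h'
        have := q.mat_total
        have h2 : ∑ a : V, ∑ b : V, SCQ.mat q a b = 0 := by simp [h']
        have := q.len_pos
        omega
      have hle : j q * SCQ.mat q x y ≤ EK j x y := Finset.single_le_sum
        (f := fun q' => j q' * SCQ.mat q' x y) (fun _ _ => Nat.zero_le _) (Finset.mem_univ q)
      rw [h x y] at hle
      have := Nat.mul_ne_zero hq hxy
      omega
    have ha₀ : Touch (EK j) x₀ := ⟨y₀, Or.inl hxy₀⟩
    have hEKle : ∀ x y, EK j x y ≤ EK k x y := by
      intro x y
      exact Finset.sum_le_sum (fun q _ => Nat.mul_le_mul_right _ (hjk q))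
    have hmatle : ∀ x y, SCQ.mat q₁ x y ≤ EK k x y := by
      intro x y
      calc SCQ.mat q₁ x y ≤ k q₁ * SCQ.mat q₁ x y := Nat.le_mul_of_pos_left _ (by omega)
        _ ≤ EK k x y := Finset.single_le_sum
            (f := fun q => k q * SCQ.mat q x y) (fun _ _ => Nat.zero_le _) (Finset.mem_univ q₁)
    have hta : Touch (EK k) x₀ := touch_mono hEKle ha₀
    have htb : Touch (EK k) x₁ := touch_mono hmatle hb₁
    have hrtg := hconn x₀ x₁ hta htb
    obtain ⟨u, v, hu, hv, hadj⟩ := crossing (A := Touch (EK j)) hrtg ha₀ hb₁n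
    -- get a cycle through the crossing edge
    have hedge : ∃ q₂, k q₂ ≠ 0 ∧ (SCQ.mat q₂ u v ≠ 0 ∨ SCQ.mat q₂ v u ≠ 0) := by
      rcases hadj with h | h
      · obtain ⟨q₂, -, hq₂⟩ := Finset.exists_ne_zero_of_sum_ne_zero h
        rw [Nat.mul_ne_zero_iff] at hq₂
        exact ⟨q₂, hq₂.1, Or.inl hq₂.2⟩
      · obtain ⟨q₂, -, hq₂⟩ := Finset.exists_ne_zero_of_sum_ne_zero h
        rw [Nat.mul_ne_zero_iff] at hq₂
        exact ⟨q₂, hq₂.1, Or.inr hq₂.2⟩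
    obtain ⟨q₂, hk₂, hm₂⟩ := hedge
    have htu : Touch (SCQ.mat q₂) u := by
      rcases hm₂ with h | h
      · exact ⟨v, Or.inl h⟩
      · exact ⟨v, Or.inr h⟩
    have htv : Touch (SCQ.mat q₂) v := by
      rcases hm₂ with h | h
      · exact ⟨u, Or.inr h⟩
      · exact ⟨u, Or.inl h⟩
    by_cases hcase : j q₂ < k q₂
    · exact (hno q₂ hcase u htu) hu
    · have hjq₂ : j q₂ ≠ 0 := by omega
      apply hv
      have hle : ∀ x y, SCQ.mat q₂ x y ≤ EK j x y := by
        intro x y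
        calc SCQ.mat q₂ x y ≤ j q₂ * SCQ.mat q₂ x y :=
            Nat.le_mul_of_pos_left _ (by omega)
          _ ≤ EK j x y := Finset.single_le_sum
              (f := fun q => j q * SCQ.mat q x y) (fun _ _ => Nat.zero_le _)
              (Finset.mem_univ q₂)
      exact touch_mono hle htv
  obtain ⟨q, hlt, hsh⟩ := hclaim
  set j' : SCQ Γ → ℕ := fun q' => j q' + if q' = q then 1 else 0 with hj'
  have hj'S : j' ∈ S := by
    refine ⟨?_, ?_, realizable_step j hjne hjreal q hsh⟩
    · intro q'
      by_cases h : q' = q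
      · subst h; simp [hj']; omega
      · simp [hj', h]; exact hjk q'
    · intro h
      have := congrFun h q
      simp [hj'] at this
  have hsum : ∑ q' : SCQ Γ, j q' < ∑ q' : SCQ Γ, j' q' := by
    rw [hj']
    rw [Finset.sum_add_distrib]
    simp
  have := @hjmax j' hj'S (le_of_lt hsum)
  beta_reduce at this
  omega

end TI

namespace TI

lemma sum_range_zmod {β : Type*} [AddCommMonoid β] (N : ℕ) [NeZero N] (f : ZMod N → β) :
    ∑ i ∈ Finset.range N, f (i : ZMod N) = ∑ z : ZMod N, f z := by
  refine Finset.sum_nbij' (i := fun n => ((n : ZMod N))) (j := fun z => z.val) ?_ ?_ ?_ ?_ ?_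
  all_goals intro a ha
  · exact Finset.mem_univ _
  · exact Finset.mem_range.2 (ZMod.val_lt a)
  · exact ZMod.val_natCast_of_lt (Finset.mem_range.1 ha)
  · show ((a.val : ℕ) : ZMod N) = a
    rw [ZMod.natCast_val, ZMod.cast_id]
  · rfl

lemma sum_zmod_shift {β : Type*} [AddCommMonoid β] (N : ℕ) [NeZero N] (f : ZMod N → β)
    (c : ZMod N) : ∑ z : ZMod N, f (z + c) = ∑ z : ZMod N, f z :=
  Fintype.sum_equiv (Equiv.addRight c) _ _ (fun z => rfl)

variable (m R : ℕ)

/-- per-edge contribution to the TI-R correlator vector -/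
noncomputable def phi (hR : 0 < R) (a b : Fin R → Fin m → Fin 2) :
    (Fin m → ℝ) × (Fin R → Fin m → Fin m → ℝ) :=
  (chi (a ⟨0, hR⟩),
   fun k => fun x y => chi (a ⟨0, hR⟩) x *
     chi (if h : (k : ℕ) + 1 < R then a ⟨(k : ℕ) + 1, h⟩ else b ⟨R - 1, by omega⟩) y)

/-- window walk of a strategy assignment -/
def win {N : ℕ} (s : ZMod N → (Fin m → Fin 2)) : ZMod N → (Fin R → Fin m → Fin 2) :=
  fun z j => s (z + ((j : ℕ) : ZMod N))

lemma win_closedPath {N : ℕ} (s : ZMod N → (Fin m → Fin 2)) :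
    IsClosedPath (dbEdge m R) N (win m R s) := by
  intro z j hj
  show s (z + 1 + ((j : ℕ) : ZMod N)) = s (z + ((j + 1 : ℕ) : ZMod N))
  congr 1
  push_cast
  ring

lemma win_of_closedPath {N : ℕ} (hR : 0 < R) (p : ZMod N → (Fin R → Fin m → Fin 2))
    (hp : IsClosedPath (dbEdge m R) N p) :
    win m R (fun z => p z ⟨0, hR⟩) = p := by
  have key : ∀ (j : ℕ) (hj : j < R) (z : ZMod N), p z ⟨j, hj⟩ = p (z + (j : ZMod N)) ⟨0, hR⟩ := by
    intro j
    induction j with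
    | zero => intro hj z; simp
    | succ j ih =>
        intro hj z
        have hjR : j < R := by omega
        have := hp z j hj  -- p (z+1) ⟨j⟩ = p z ⟨j+1⟩
        rw [← this, ih hjR (z + 1)]
        congr 1
        push_cast
        ring
  funext z j
  rw [win]
  rcases j with ⟨j, hj⟩
  rw [key j hj z]

lemma genEq (N : ℕ) [NeZero N] (hR : 0 < R) (s : ZMod N → (Fin m → Fin 2)) :
    ∑ i ∈ Finset.range N, tiRVec m R (fun j => s ((i : ZMod N) + (j : ZMod N)))
      = ∑ z : ZMod N, phi m R hR (win m R s z) (win m R s (z + 1)) := by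
  have hRr : ((R : ℝ) + 1) ≠ 0 := by positivity
  apply Prod.ext
  · -- first components
    rw [Prod.fst_sum, Prod.fst_sum]
    have lhs1 : ∀ i ∈ Finset.range N,
        (tiRVec m R (fun j => s ((i : ZMod N) + (j : ZMod N)))).1
        = ((R : ℝ) + 1)⁻¹ • ∑ j ∈ Finset.range (R + 1), chi (s ((i : ZMod N) + (j : ZMod N))) :=
      fun i _ => rfl
    rw [Finset.sum_congr rfl lhs1, ← Finset.smul_sum, Finset.sum_comm]
    have inner : ∀ j ∈ Finset.range (R + 1),
        ∑ i ∈ Finset.range N, chi (s ((i : ZMod N) + (j : ZMod N)))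
        = ∑ z : ZMod N, chi (s z) := by
      intro j _
      rw [sum_range_zmod N (fun z => chi (s (z + (j : ZMod N))))]
      exact sum_zmod_shift N (fun z => chi (s z)) _
    rw [Finset.sum_congr rfl inner, Finset.sum_const, Finset.card_range]
    have rhs1 : ∀ z : ZMod N, (phi m R hR (win m R s z) (win m R s (z + 1))).1
        = chi (s z) := by
      intro z
      show chi (win m R s z ⟨0, hR⟩) = chi (s z)
      rw [win]
      norm_num
    rw [Finset.sum_congr rfl (fun z _ => rhs1 z)]
    rw [← Nat.cast_smul_eq_nsmul ℝ, smul_smul]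
    push_cast
    rw [inv_mul_cancel₀ hRr, one_smul]
  · -- second components
    funext k
    rw [Prod.snd_sum, Prod.snd_sum, Finset.sum_apply, Finset.sum_apply]
    have hkR : (k : ℕ) < R := k.isLt
    have hRk : (0 : ℕ) < R - (k : ℕ) := by omega
    have hRkr : ((R - (k : ℕ) : ℕ) : ℝ) ≠ 0 := by
      simp only [ne_eq, Nat.cast_eq_zero]
      omega
    have lhs1 : ∀ i ∈ Finset.range N,
        (tiRVec m R (fun j => s ((i : ZMod N) + (j : ZMod N)))).2 k
        = ((R - (k : ℕ) : ℕ) : ℝ)⁻¹ • ∑ j ∈ Finset.range (R - (k : ℕ)),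
            (fun x y => chi (s ((i : ZMod N) + (j : ZMod N))) x
              * chi (s ((i : ZMod N) + ((j + (k : ℕ) + 1 : ℕ) : ZMod N))) y
              : Fin m → Fin m → ℝ) := fun i _ => rfl
    rw [Finset.sum_congr rfl lhs1, ← Finset.smul_sum, Finset.sum_comm]
    set H : ZMod N → (Fin m → Fin m → ℝ) := fun z =>
      (fun x y => chi (s z) x * chi (s (z + (((k : ℕ) + 1 : ℕ) : ZMod N))) y) with hH
    have inner : ∀ j ∈ Finset.range (R - (k : ℕ)),
        (∑ i ∈ Finset.range N,
          (fun x y => chi (s ((i : ZMod N) + (j : ZMod N))) x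
            * chi (s ((i : ZMod N) + ((j + (k : ℕ) + 1 : ℕ) : ZMod N))) y
            : Fin m → Fin m → ℝ))
        = ∑ z : ZMod N, H z := by
      intro j _
      have e1 : ∀ i : ZMod N, (fun x y => chi (s (i + (j : ZMod N))) x
          * chi (s (i + ((j + (k : ℕ) + 1 : ℕ) : ZMod N))) y : Fin m → Fin m → ℝ)
          = H (i + (j : ZMod N)) := by
        intro i
        rw [hH]
        funext x y
        congr 3
        push_cast
        ring
      calc (∑ i ∈ Finset.range N,
          (fun x y => chi (s ((i : ZMod N) + (j : ZMod N))) x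
            * chi (s ((i : ZMod N) + ((j + (k : ℕ) + 1 : ℕ) : ZMod N))) y
            : Fin m → Fin m → ℝ))
          = ∑ i ∈ Finset.range N, H ((i : ZMod N) + (j : ZMod N)) :=
            Finset.sum_congr rfl (fun i _ => e1 _)
        _ = ∑ z : ZMod N, H (z + (j : ZMod N)) :=
            sum_range_zmod N (fun z => H (z + (j : ZMod N)))
        _ = ∑ z : ZMod N, H z := sum_zmod_shift N H _
    rw [Finset.sum_congr rfl inner, Finset.sum_const, Finset.card_range]
    have rhs1 : ∀ z : ZMod N, (phi m R hR (win m R s z) (win m R s (z + 1))).2 k = H z := by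
      intro z
      rw [hH]
      show (fun x y => chi (win m R s z ⟨0, hR⟩) x * chi (_) y : Fin m → Fin m → ℝ) = _
      funext x y
      congr 2
      · show win m R s z ⟨0, hR⟩ = s z
        rw [win]; norm_num
      · by_cases h : (k : ℕ) + 1 < R
        · rw [dif_pos h]
          show win m R s z ⟨(k : ℕ) + 1, h⟩ = s (z + (((k : ℕ) + 1 : ℕ) : ZMod N))
          rw [win]
        · rw [dif_neg h]
          have hkk : (k : ℕ) + 1 = R := by omega
          show s (z + 1 + (((R - 1 : ℕ)) : ZMod N)) = s (z + (((k : ℕ) + 1 : ℕ) : ZMod N))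
          congr 1
          have h5 : ((R - 1 : ℕ) : ZMod N) + 1 = ((R : ℕ) : ZMod N) := by
            have h6 : (R - 1 + 1 : ℕ) = R := by omega
            calc ((R - 1 : ℕ) : ZMod N) + 1 = ((R - 1 + 1 : ℕ) : ZMod N) := by push_cast; ring
              _ = ((R : ℕ) : ZMod N) := by rw [h6]
          rw [hkk, ← h5]
          ring
    rw [Finset.sum_congr rfl (fun z _ => rhs1 z)]
    rw [← Nat.cast_smul_eq_nsmul ℝ, smul_smul, inv_mul_cancel₀ hRkr, one_smul]

end TI

namespace TI

variable (m R N : ℕ)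

abbrev VV (m R : ℕ) := Fin R → Fin m → Fin 2

/-- the generator set of the TI-R polytope -/
def genSet : Set ((Fin m → ℝ) × (Fin R → Fin m → Fin m → ℝ)) :=
  {v | ∃ s : ZMod N → (Fin m → Fin 2),
    v = (N : ℝ)⁻¹ • ∑ i ∈ Finset.range N,
      tiRVec m R (fun j => s ((i : ZMod N) + (j : ZMod N)))}

lemma tiRPolytope_eq : tiRPolytope m R N = convexHull ℝ (genSet m R N) := rfl

noncomputable def pointOf (hR : 0 < R) (E : VV m R → VV m R → ℕ) :
    (Fin m → ℝ) × (Fin R → Fin m → Fin m → ℝ) :=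
  (N : ℝ)⁻¹ • ∑ a : VV m R, ∑ b : VV m R, E a b • phi m R hR a b

lemma mem_genSet_iff [NeZero N] (hR : 0 < R) (v : (Fin m → ℝ) × (Fin R → Fin m → Fin m → ℝ)) :
    v ∈ genSet m R N ↔ ∃ p : ZMod N → VV m R,
      IsClosedPath (dbEdge m R) N p ∧ v = pointOf m R N hR (Ecnt N p) := by
  constructor
  · rintro ⟨s, rfl⟩
    refine ⟨win m R s, win_closedPath m R s, ?_⟩
    rw [pointOf, genEq m R N hR s, sum_edge]
  · rintro ⟨p, hp, rfl⟩
    refine ⟨fun z => p z ⟨0, hR⟩, ?_⟩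
    rw [genEq m R N hR (fun z => p z ⟨0, hR⟩), win_of_closedPath m R hR p hp,
      pointOf, sum_edge]

/-- a cycle-multiset representation of a point -/
def Rep (hR : 0 < R) (x : (Fin m → ℝ) × (Fin R → Fin m → Fin m → ℝ))
    (kk : SCQ (dbEdge m R) → ℕ) : Prop :=
  (∑ q : SCQ (dbEdge m R), kk q * SCQ.len q = N) ∧ Conn (EK kk) ∧
    x = pointOf m R N hR (EK kk)

lemma sum_len_eq (kk : SCQ (dbEdge m R) → ℕ) :
    ∑ q : SCQ (dbEdge m R), kk q * SCQ.len q
      = ∑ a : VV m R, ∑ b : VV m R, EK kk a b := by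
  have h1 : ∀ q : SCQ (dbEdge m R), kk q * SCQ.len q
      = ∑ a : VV m R, ∑ b : VV m R, kk q * SCQ.mat q a b := by
    intro q
    rw [← SCQ.mat_total q, Finset.mul_sum]
    exact Finset.sum_congr rfl (fun a _ => Finset.mul_sum _ _ _)
  rw [Finset.sum_congr rfl (fun q _ => h1 q)]
  rw [Finset.sum_comm]
  refine Finset.sum_congr rfl (fun a _ => ?_)
  rw [Finset.sum_comm]
  rfl

lemma rep_of_mem_genSet [NeZero N] (hR : 0 < R)
    (v : (Fin m → ℝ) × (Fin R → Fin m → Fin m → ℝ)) (hv : v ∈ genSet m R N) :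
    ∃ kk, Rep m R N hR v kk := by
  obtain ⟨p, hp, rfl⟩ := (mem_genSet_iff m R N hR v).1 hv
  obtain ⟨kk, hkk⟩ := decompose (Γ := dbEdge m R) (Ecnt N p) (Ecnt_balanced N p)
    (fun a b h => by
      obtain ⟨i, h1, h2⟩ := (Ecnt_pos_iff N p a b).1 h
      exact h1 ▸ h2 ▸ hp i)
  have hEeq : EK kk = Ecnt N p := by
    funext a b
    exact (hkk a b).symm
  refine ⟨kk, ?_, ?_, ?_⟩
  · rw [sum_len_eq, hEeq, Ecnt_total]
  · rw [hEeq]; exact conn_Ecnt N p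
  · rw [hEeq]

lemma mem_genSet_of_rep [NeZero N] (hR : 0 < R) (kk : SCQ (dbEdge m R) → ℕ)
    (hsum : ∑ q : SCQ (dbEdge m R), kk q * SCQ.len q = N) (hconn : Conn (EK kk)) :
    pointOf m R N hR (EK kk) ∈ genSet m R N := by
  have hkkne : kk ≠ 0 := by
    intro h
    rw [h] at hsum
    simp at hsum
    exact (NeZero.ne N) hsum.symm
  obtain ⟨p, hp, hcnt⟩ := euler kk hkkne hconn
  obtain ⟨p', hp', hcnt'⟩ := path_cast hsum hp
  rw [mem_genSet_iff m R N hR]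
  refine ⟨p', hp', ?_⟩
  congr 1
  funext a b
  rw [hcnt' a b, hcnt a b]

end TI

namespace TI

variable (m R N : ℕ)

lemma sum_split {α : Type*} [Fintype α] [DecidableEq α] {β : Type*} [AddCommMonoid β]
    (f : α → β) (q q' : α) (h : q ≠ q') :
    ∑ d : α, f d = f q + (f q' + ∑ d ∈ (Finset.univ.erase q).erase q', f d) := by
  rw [← Finset.add_sum_erase _ f (Finset.mem_univ q)]
  congr 1
  rw [← Finset.add_sum_erase _ f (Finset.mem_erase.2 ⟨h.symm, Finset.mem_univ q'⟩)]

open Classical in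
lemma exchange [NeZero N] (hR : 0 < R)
    (x : (Fin m → ℝ) × (Fin R → Fin m → Fin m → ℝ))
    (hx : x ∈ Set.extremePoints ℝ (tiRPolytope m R N))
    (kk : SCQ (dbEdge m R) → ℕ) (hrep : Rep m R N hR x kk)
    (q q' : SCQ (dbEdge m R)) (hne : q ≠ q')
    (hq : Fintype.card (VV m R) < kk q) (hq' : Fintype.card (VV m R) < kk q')
    (hab : kk q' * SCQ.len q' ≤ kk q * SCQ.len q) :
    ∃ kk', Rep m R N hR x kk' ∧
      ∑ d : SCQ (dbEdge m R), (kk d * SCQ.len d) ^ 2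
        < ∑ d : SCQ (dbEdge m R), (kk' d * SCQ.len d) ^ 2 := by
  classical
  set nV := Fintype.card (VV m R) with hnV
  set lq := SCQ.len q with hlqdef
  set lq' := SCQ.len q' with hlq'def
  have hlq : lq ≤ nV := SCQ.len_le q
  have hlq' : lq' ≤ nV := SCQ.len_le q'
  have hlqpos : 0 < lq := SCQ.len_pos q
  have hlq'pos : 0 < lq' := SCQ.len_pos q'
  set kkp : SCQ (dbEdge m R) → ℕ :=
    fun d => if d = q then kk q + lq' else if d = q' then kk q' - lq else kk d with hkkp
  set kkm : SCQ (dbEdge m R) → ℕ :=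
    fun d => if d = q then kk q - lq' else if d = q' then kk q' + lq else kk d with hkkm
  have hpq : kkp q = kk q + lq' := by simp [hkkp]
  have hpq' : kkp q' = kk q' - lq := by simp [hkkp, hne.symm]
  have hmq : kkm q = kk q - lq' := by simp [hkkm]
  have hmq' : kkm q' = kk q' + lq := by simp [hkkm, hne.symm]
  have hoff : ∀ d, d ≠ q → d ≠ q' → kkp d = kk d ∧ kkm d = kk d := by
    intro d h1 h2
    constructor <;> simp [hkkp, hkkm, h1, h2]
  -- (a) total length is preserved
  have hsum : ∀ (g : SCQ (dbEdge m R) → ℕ), (∀ d, d ≠ q → d ≠ q' → g d = kk d) →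
      g q * lq + g q' * lq' = kk q * lq + kk q' * lq' →
      ∑ d : SCQ (dbEdge m R), g d * SCQ.len d = N := by
    intro g hgoff hg2
    rw [sum_split (fun d => g d * SCQ.len d) q q' hne]
    have hrest : ∑ d ∈ (Finset.univ.erase q).erase q', g d * SCQ.len d
        = ∑ d ∈ (Finset.univ.erase q).erase q', kk d * SCQ.len d := by
      refine Finset.sum_congr rfl (fun d hd => ?_)
      simp only [Finset.mem_erase] at hd
      rw [hgoff d hd.2.1 hd.1]
    rw [hrest]
    have := hrep.1
    rw [sum_split (fun d => kk d * SCQ.len d) q q' hne] at this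
    rw [← this, ← hlqdef, ← hlq'def]
    omega
  have ht1 : lq * lq' ≤ kk q' * lq' := Nat.mul_le_mul_right _ (by omega)
  have ht2 : lq' * lq ≤ kk q * lq := Nat.mul_le_mul_right _ (by omega)
  have hsump : ∑ d : SCQ (dbEdge m R), kkp d * SCQ.len d = N := by
    refine hsum kkp (fun d h1 h2 => (hoff d h1 h2).1) ?_
    rw [hpq, hpq', Nat.add_mul, Nat.sub_mul]
    have h3 : lq' * lq = lq * lq' := Nat.mul_comm _ _
    omega
  have hsumm : ∑ d : SCQ (dbEdge m R), kkm d * SCQ.len d = N := by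
    refine hsum kkm (fun d h1 h2 => (hoff d h1 h2).2) ?_
    rw [hmq, hmq', Nat.add_mul, Nat.sub_mul]
    have h3 : lq' * lq = lq * lq' := Nat.mul_comm _ _
    omega
  -- (b) the two perturbations average to kk
  have hdd : ∀ d, kkp d + kkm d = 2 * kk d := by
    intro d
    by_cases h1 : d = q
    · subst h1; rw [hpq, hmq]; omega
    by_cases h2 : d = q'
    · subst h2; rw [hpq', hmq']; omega
    · rw [(hoff d h1 h2).1, (hoff d h1 h2).2]; omega
  have hEK : ∀ a b, EK kkp a b + EK kkm a b = 2 * EK kk a b := by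
    intro a b
    rw [EK, EK, EK, ← Finset.sum_add_distrib, Finset.mul_sum]
    refine Finset.sum_congr rfl (fun d _ => ?_)
    rw [← Nat.add_mul, hdd d, Nat.mul_assoc]
  -- (c) supports agree
  have hposiff : ∀ d, (kkp d = 0 ↔ kk d = 0) ∧ (kkm d = 0 ↔ kk d = 0) := by
    intro d
    by_cases h1 : d = q
    · subst h1; rw [hpq, hmq]; omega
    by_cases h2 : d = q'
    · subst h2; rw [hpq', hmq']; omega
    · rw [(hoff d h1 h2).1, (hoff d h1 h2).2]; omega
  have hsupp : ∀ (g : SCQ (dbEdge m R) → ℕ), (∀ d, g d = 0 ↔ kk d = 0) →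
      ∀ a b, EK kk a b = 0 ↔ EK g a b = 0 := by
    intro g hg a b
    rw [EK, EK, Finset.sum_eq_zero_iff, Finset.sum_eq_zero_iff]
    constructor <;> intro h d hd
    · have := h d hd
      rcases Nat.mul_eq_zero.1 this with h' | h'
      · exact Nat.mul_eq_zero.2 (Or.inl ((hg d).2 h'))
      · exact Nat.mul_eq_zero.2 (Or.inr h')
    · have := h d hd
      rcases Nat.mul_eq_zero.1 this with h' | h'
      · exact Nat.mul_eq_zero.2 (Or.inl ((hg d).1 h'))
      · exact Nat.mul_eq_zero.2 (Or.inr h')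
  have hconnp : Conn (EK kkp) :=
    conn_of_support_eq (hsupp kkp (fun d => (hposiff d).1)) hrep.2.1
  have hconnm : Conn (EK kkm) :=
    conn_of_support_eq (hsupp kkm (fun d => (hposiff d).2)) hrep.2.1
  -- (d) membership in the polytope
  have hyp : pointOf m R N hR (EK kkp) ∈ tiRPolytope m R N := by
    rw [tiRPolytope_eq]
    exact subset_convexHull ℝ _ (mem_genSet_of_rep m R N hR kkp hsump hconnp)
  have hym : pointOf m R N hR (EK kkm) ∈ tiRPolytope m R N := by
    rw [tiRPolytope_eq]
    exact subset_convexHull ℝ _ (mem_genSet_of_rep m R N hR kkm hsumm hconnm)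
  -- (e) x is the midpoint
  have hmid : pointOf m R N hR (EK kkp) + pointOf m R N hR (EK kkm) = x + x := by
    rw [hrep.2.2, pointOf, pointOf, pointOf, ← smul_add, ← Finset.sum_add_distrib]
    have : ∀ a : VV m R, (∑ b : VV m R, EK kkp a b • phi m R hR a b)
        + (∑ b : VV m R, EK kkm a b • phi m R hR a b)
        = ∑ b : VV m R, (2 * EK kk a b) • phi m R hR a b := by
      intro a
      rw [← Finset.sum_add_distrib]
      refine Finset.sum_congr rfl (fun b _ => ?_)
      rw [← add_nsmul, hEK a b]
    rw [Finset.sum_congr rfl (fun a _ => this a)]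
    have h2 : ∀ a : VV m R, ∑ b : VV m R, (2 * EK kk a b) • phi m R hR a b
        = 2 • ∑ b : VV m R, EK kk a b • phi m R hR a b := by
      intro a
      rw [Finset.smul_sum]
      refine Finset.sum_congr rfl (fun b _ => ?_)
      rw [mul_comm, mul_nsmul]
    rw [Finset.sum_congr rfl (fun a _ => h2 a), ← Finset.smul_sum, smul_comm, two_nsmul]
  have hopen : x ∈ openSegment ℝ (pointOf m R N hR (EK kkp)) (pointOf m R N hR (EK kkm)) := by
    refine ⟨(2 : ℝ)⁻¹, (2 : ℝ)⁻¹, by norm_num, by norm_num, by norm_num, ?_⟩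
    rw [← smul_add, hmid]
    rw [← two_smul ℝ x, smul_smul]
    norm_num
  obtain ⟨-, hxe⟩ := mem_extremePoints.1 hx
  obtain ⟨hyx, -⟩ := hxe _ hyp _ hym hopen
  -- (f) kkp is a representation of x
  refine ⟨kkp, ⟨hsump, hconnp, hyx.symm⟩, ?_⟩
  -- (g) the measure strictly increases
  rw [sum_split (fun d => (kk d * SCQ.len d) ^ 2) q q' hne,
    sum_split (fun d => (kkp d * SCQ.len d) ^ 2) q q' hne]
  have hrest : ∑ d ∈ (Finset.univ.erase q).erase q', (kkp d * SCQ.len d) ^ 2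
      = ∑ d ∈ (Finset.univ.erase q).erase q', (kk d * SCQ.len d) ^ 2 := by
    refine Finset.sum_congr rfl (fun d hd => ?_)
    simp only [Finset.mem_erase] at hd
    rw [(hoff d hd.2.1 hd.1).1]
  rw [hrest]
  have hQ : (kk q * lq) ^ 2 + (kk q' * lq') ^ 2 < (kkp q * lq) ^ 2 + (kkp q' * lq') ^ 2 := by
    rw [hpq, hpq', Nat.add_mul, Nat.sub_mul]
    set a := kk q * lq with ha
    set b := kk q' * lq' with hb
    have hcomm : lq' * lq = lq * lq' := Nat.mul_comm _ _
    rw [hcomm]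
    set t := lq * lq' with htt
    have htpos : 0 < t := Nat.mul_pos hlqpos hlq'pos
    have hbt : t ≤ b := ht1
    set c := b - t with hcdef
    have hbct : b = c + t := by omega
    have hc : c < a := by omega
    have e1 : (a + t) ^ 2 = a ^ 2 + 2 * (a * t) + t ^ 2 := by ring
    have e2 : (c + t) ^ 2 = c ^ 2 + 2 * (c * t) + t ^ 2 := by ring
    rw [hbct, e2, e1]
    have hct : c * t < a * t := Nat.mul_lt_mul_of_pos_right hc htpos
    omega
  rw [hlqdef, hlq'def] at hQ
  omega

end TI

namespace TI

variable (m R N : ℕ)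

open Classical in
lemma key [NeZero N] (hR : 0 < R) (x : (Fin m → ℝ) × (Fin R → Fin m → Fin m → ℝ))
    (hx : x ∈ Set.extremePoints ℝ (tiRPolytope m R N)) :
    ∃ kk, Rep m R N hR x kk ∧ ∀ q q', q ≠ q' →
      Fintype.card (VV m R) < kk q → Fintype.card (VV m R) < kk q' → False := by
  classical
  have hxT : x ∈ genSet m R N := by
    rw [tiRPolytope_eq] at hx
    exact extremePoints_convexHull_subset hx
  set S : Set (SCQ (dbEdge m R) → ℕ) := {kk | Rep m R N hR x kk} with hS
  have hSfin : S.Finite := by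
    refine (Set.finite_Icc (0 : SCQ (dbEdge m R) → ℕ) (fun _ => N)).subset ?_
    rintro kk hkk
    refine ⟨fun q => Nat.zero_le _, fun q => ?_⟩
    have h1 : kk q * SCQ.len q ≤ N := by
      rw [← hkk.1]
      exact Finset.single_le_sum (f := fun d => kk d * SCQ.len d)
        (fun _ _ => Nat.zero_le _) (Finset.mem_univ q)
    have h2 := SCQ.len_pos q
    calc kk q ≤ kk q * SCQ.len q := Nat.le_mul_of_pos_right _ h2
      _ ≤ N := h1
  have hSne : S.Nonempty := rep_of_mem_genSet m R N hR x hxT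
  obtain ⟨kk, hkkS, hmax⟩ := Set.Finite.exists_maximalFor
    (fun kk => ∑ d : SCQ (dbEdge m R), (kk d * SCQ.len d) ^ 2) S hSfin hSne
  refine ⟨kk, hkkS, ?_⟩
  intro q q' hne hq hq'
  rcases le_total (kk q' * SCQ.len q') (kk q * SCQ.len q) with hab | hab
  · obtain ⟨kk', h1, h2⟩ := exchange m R N hR x hx kk hkkS q q' hne hq hq' hab
    have := @hmax kk' h1 (le_of_lt h2)
    beta_reduce at this
    omega
  · obtain ⟨kk', h1, h2⟩ := exchange m R N hR x hx kk hkkS q' q hne.symm hq' hq hab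
    have := @hmax kk' h1 (le_of_lt h2)
    beta_reduce at this
    omega

open Classical in
noncomputable def decode (hR : 0 < R)
    (dd : Σ c₀ : SCQ (dbEdge m R),
      ({c : SCQ (dbEdge m R) // c ≠ c₀} → Fin (Fintype.card (VV m R) + 1))) :
    (Fin m → ℝ) × (Fin R → Fin m → Fin m → ℝ) :=
  pointOf m R N hR (EK (fun q => if h : q = dd.1
    then (N - ∑ c : {c : SCQ (dbEdge m R) // c ≠ dd.1}, (dd.2 c : ℕ) * SCQ.len c.1)
      / SCQ.len dd.1
    else (dd.2 ⟨q, h⟩ : ℕ)))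

open Classical in
lemma key2 [NeZero N] (hR : 0 < R) (x : (Fin m → ℝ) × (Fin R → Fin m → Fin m → ℝ))
    (hx : x ∈ Set.extremePoints ℝ (tiRPolytope m R N)) :
    ∃ dd, decode m R N hR dd = x := by
  classical
  obtain ⟨kk, hrep, hpair⟩ := key m R N hR x hx
  set nV := Fintype.card (VV m R) with hnV
  have hexne : ∃ q, kk q ≠ 0 := by
    by_contra h
    push_neg at h
    have := hrep.1
    rw [Finset.sum_congr rfl (fun q _ => by rw [h q, Nat.zero_mul])] at this
    rw [Finset.sum_const, smul_zero] at this
    exact (NeZero.ne N) this.symm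
  obtain ⟨c₀, hc₀⟩ : ∃ c₀, (nV < kk c₀) ∨ ((∀ q, kk q ≤ nV) ∧ kk c₀ ≠ 0) := by
    by_cases hbig : ∃ q, nV < kk q
    · obtain ⟨q, hq⟩ := hbig
      exact ⟨q, Or.inl hq⟩
    · push_neg at hbig
      obtain ⟨q, hq⟩ := hexne
      exact ⟨q, Or.inr ⟨hbig, hq⟩⟩
  have hsmall : ∀ q, q ≠ c₀ → kk q ≤ nV := by
    intro q hq
    rcases hc₀ with h | h
    · by_contra h'
      push_neg at h'
      exact hpair q c₀ hq h' h
    · exact h.1 q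
  refine ⟨⟨c₀, fun c => ⟨kk c.1, by have := hsmall c.1 c.2; omega⟩⟩, ?_⟩
  rw [decode]
  have hfun : (fun q => if h : q = c₀
      then (N - ∑ c : {c : SCQ (dbEdge m R) // c ≠ c₀},
          ((⟨kk c.1, by have := hsmall c.1 c.2; omega⟩ : Fin (nV + 1)) : ℕ) * SCQ.len c.1)
        / SCQ.len c₀
      else kk q) = kk := by
    funext q
    by_cases h : q = c₀
    · subst h
      rw [dif_pos rfl]
      have hsub : ∑ c : {c : SCQ (dbEdge m R) // c ≠ q},
          ((⟨kk c.1, by have := hsmall c.1 c.2; omega⟩ : Fin (nV + 1)) : ℕ) * SCQ.len c.1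
          = ∑ d ∈ Finset.univ.erase q, kk d * SCQ.len d := by
        rw [← Finset.sum_subtype (Finset.univ.erase q)
          (fun d => by simp [Finset.mem_erase] : ∀ d, d ∈ Finset.univ.erase q ↔ d ≠ q)
          (fun d => kk d * SCQ.len d)]
      rw [hsub]
      have hsplitN : kk q * SCQ.len q + ∑ d ∈ Finset.univ.erase q, kk d * SCQ.len d = N := by
        rw [← hrep.1]
        exact Finset.add_sum_erase _ (fun d => kk d * SCQ.len d) (Finset.mem_univ q)
      have : N - ∑ d ∈ Finset.univ.erase q, kk d * SCQ.len d = kk q * SCQ.len q := by omega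
      rw [this]
      exact Nat.mul_div_cancel _ (SCQ.len_pos q)
    · rw [dif_neg h]
  rw [hfun]
  exact hrep.2.2.symm

end TI

/-- for every `m ≥ 1`, `R ≥ 1` and `N ≥ 1`, the TI-`R` local polytope
`L^{(N,m,R)}` has at most `C * (2^{Rm} + 1)^(C-1)` extreme points, where `C` is the
number of simple cycles (up to cyclic rotation) of the De Bruijn graph `DB(2^m,R)`,
whose node set has cardinality `2^{Rm}`. -/
theorem card_extremePoints_tiRPolytope_le (m R N : ℕ) (hm : 1 ≤ m) (hR : 1 ≤ R)
    (hN : 1 ≤ N) :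
    Nat.card (Set.extremePoints ℝ (tiRPolytope m R N)) ≤
      numCycles (dbEdge m R) * (2 ^ (R * m) + 1) ^ (numCycles (dbEdge m R) - 1) := by
  classical
  haveI : NeZero N := ⟨by omega⟩
  have hR0 : 0 < R := hR
  set D := TI.decode m R N hR0 with hD
  have hsub : Set.extremePoints ℝ (tiRPolytope m R N) ⊆ Set.range D := by
    intro x hx
    obtain ⟨dd, hdd⟩ := TI.key2 m R N hR0 x hx
    exact ⟨dd, hdd⟩
  have h1 : Nat.card (Set.extremePoints ℝ (tiRPolytope m R N)) ≤ Nat.card (Set.range D) :=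
    Nat.card_mono (Set.finite_range D) hsub
  have h2 : Nat.card (Set.range D)
      ≤ Nat.card (Σ c₀ : TI.SCQ (dbEdge m R),
        ({c : TI.SCQ (dbEdge m R) // c ≠ c₀} → Fin (Fintype.card (TI.VV m R) + 1))) :=
    Nat.card_le_card_of_surjective (Set.rangeFactorization D) Set.rangeFactorization_surjective
  have hC : Nat.card (TI.SCQ (dbEdge m R)) = numCycles (dbEdge m R) := rfl
  have hCf : Fintype.card (TI.SCQ (dbEdge m R)) = numCycles (dbEdge m R) := by
    rw [← hC, Nat.card_eq_fintype_card]
  have hnV : Fintype.card (TI.VV m R) = 2 ^ (R * m) := by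
    calc Fintype.card (TI.VV m R)
        = Fintype.card (Fin m → Fin 2) ^ Fintype.card (Fin R) := Fintype.card_fun
      _ = (Fintype.card (Fin 2) ^ Fintype.card (Fin m)) ^ Fintype.card (Fin R) := by
          rw [Fintype.card_fun]
      _ = 2 ^ (R * m) := by
          rw [Fintype.card_fin, Fintype.card_fin, Fintype.card_fin, ← pow_mul, mul_comm]
  have h3 : Nat.card (Σ c₀ : TI.SCQ (dbEdge m R),
      ({c : TI.SCQ (dbEdge m R) // c ≠ c₀} → Fin (Fintype.card (TI.VV m R) + 1)))
      = numCycles (dbEdge m R) * (2 ^ (R * m) + 1) ^ (numCycles (dbEdge m R) - 1) := by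
    rw [Nat.card_eq_fintype_card, Fintype.card_sigma]
    have hsubty : ∀ c₀ : TI.SCQ (dbEdge m R),
        Fintype.card {c : TI.SCQ (dbEdge m R) // c ≠ c₀} = numCycles (dbEdge m R) - 1 := by
      intro c₀
      have := Fintype.card_subtype_compl (fun c : TI.SCQ (dbEdge m R) => c = c₀)
      rw [Fintype.card_subtype_eq] at this
      rw [← hCf]
      exact this
    have hterm : ∀ c₀ : TI.SCQ (dbEdge m R),
        Fintype.card ({c : TI.SCQ (dbEdge m R) // c ≠ c₀} → Fin (Fintype.card (TI.VV m R) + 1))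
        = (2 ^ (R * m) + 1) ^ (numCycles (dbEdge m R) - 1) := by
      intro c₀
      rw [Fintype.card_fun, Fintype.card_fin, hsubty c₀, hnV]
    rw [Finset.sum_congr rfl (fun c₀ _ => hterm c₀), Finset.sum_const, Finset.card_univ,
      hCf, smul_eq_mul]
  omega
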